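/- arXiv:2509.13791 — 2 statements merged into one kernel-verified Lean document; each statement's English description precedes it below -/
import Mathlib

section
/- For every p ∈ (1,∞), the operator norm of the one-dimensional Gaussian maximal function satisfies ‖𝒢_*^1‖_{L^p(ℝ)} ≥ 𝒢_*^1(|x|^{−1/p})(1), i.e. it is at least the value at the point 1 of the Gaussian maximal function applied to the function x ↦ |x|^{−1/p}. In particular, ‖𝒢_*^1‖_{L^p(ℝ)} ≥ (2^{(p−1)/p}/√(2eπ)) · p/(p−1). -/
open MeasureTheory Filter
open scoped ENNReal NNReal Real Topology

noncomputable section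

/-- The one-dimensional heat (Gaussian) average
`𝒢_t^1 f(x) = (4πt)^{−1/2} ∫ e^{−y²/(4t)} f(x−y) dy`. -/
def gauss1 (t : ℝ) (f : ℝ → ℝ) (x : ℝ) : ℝ :=
  (4 * π * t) ^ (-(1 : ℝ) / 2) * ∫ y : ℝ, Real.exp (-y ^ 2 / (4 * t)) * f (x - y)

/-- The one-dimensional Gaussian maximal function `𝒢_*^1 f(x) = sup_{t>0} |𝒢_t^1 f(x)|`,
valued in `ℝ≥0∞`. -/
def gauss1Max (f : ℝ → ℝ) (x : ℝ) : ℝ≥0∞ :=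
  ⨆ (t : ℝ) (_ : 0 < t), (‖gauss1 t f x‖₊ : ℝ≥0∞)

/-- The operator norm of `𝒢_*^1` on `L^p(ℝ)`: the best constant `C` in
`‖𝒢_*^1 f‖_{L^p} ≤ C ‖f‖_{L^p}` over all `f ∈ L^p(ℝ)`. -/
def gauss1OpNorm (p : ℝ) : ℝ≥0∞ :=
  sInf {C : ℝ≥0∞ | ∀ f : ℝ → ℝ, MemLp f (ENNReal.ofReal p) volume →
    (∫⁻ x, gauss1Max f x ^ p) ^ (1 / p) ≤ C * eLpNorm f (ENNReal.ofReal p) volume}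

/-!
Write `h(x) = |x| ^ (-1/p)` and `f_{a,b} = h · 1_{a ≤ |x| ≤ b}`. Since `h` is homogeneous of
degree `-1/p` and the heat semigroup commutes with dilations,
`𝒢_{tλ²} f(λx) = 𝒢_t (f(λ·))(x)`, one gets `𝒢_*^1 f_{a,nb}(x) ≥ |x| ^ (-1/p) · 𝒢_t^1 f_{a,b}(1)`
for `1 ≤ |x| ≤ n`. Integrating, `‖𝒢_*^1 f_{a,nb}‖_p^p ≥ (𝒢_t^1 f_{a,b}(1))^p · 2 log n`, whereas
`‖f_{a,nb}‖_p^p = 2 log n + 2 log (b/a)`. Letting `n → ∞` bounds `𝒢_t^1 f_{a,b}(1)` by the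
operator norm, and then `a → 0`, `b → ∞` bounds `𝒢_t^1 h(1)`. The explicit constant is
`𝒢_{1/2}^1 h(1)`, estimated from below by keeping only `|y| ≤ 1` in the integral, where the
kernel is at least `e^{-1/2}`.
-/

open Set Real

lemma neg_one_div_nonpos {p : ℝ} (hp : 0 ≤ p) : -1 / p ≤ 0 :=
  div_nonpos_of_nonpos_of_nonneg (by norm_num) hp

lemma neg_one_lt_neg_one_div {p : ℝ} (hp : 1 < p) : -1 < -1 / p := by
  rw [lt_div_iff₀ (zero_lt_one.trans hp)]
  linarith

lemma le_of_forall_mul_le_mul_add {x y k : ℝ} (h : ∀ L, 0 ≤ L → x * L ≤ y * L + k) :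
    x ≤ y := by
  by_contra! hxy
  have hk : 0 ≤ k := by simpa using h 0 le_rfl
  have hL := h ((k + 1) / (x - y)) (by have := sub_pos.mpr hxy; positivity)
  have hcancel : (x - y) * ((k + 1) / (x - y)) = k + 1 :=
    mul_div_cancel₀ _ (sub_pos.mpr hxy).ne'
  nlinarith

section Kernel

variable {t : ℝ}

lemma integrable_exp_neg_sq_div (ht : 0 < t) :
    Integrable fun y : ℝ => exp (-y ^ 2 / (4 * t)) := by
  convert integrable_exp_neg_mul_sq (b := 1 / (4 * t)) (by positivity) using 3
  ring

lemma exp_neg_sq_div_le_one (ht : 0 ≤ t) (y : ℝ) : exp (-y ^ 2 / (4 * t)) ≤ 1 :=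
  exp_le_one_iff.mpr (div_nonpos_of_nonpos_of_nonneg (by nlinarith) (by positivity))

lemma intervalIntegrable_abs_rpow {r : ℝ} (hr : -1 < r) (a b : ℝ) :
    IntervalIntegrable (fun u : ℝ => |u| ^ r) volume a b := by
  have hpos : ∀ c, 0 ≤ c → IntervalIntegrable (fun u : ℝ => |u| ^ r) volume 0 c := by
    intro c hc
    refine (intervalIntegral.intervalIntegrable_rpow' hr).congr fun u hu => ?_
    rw [uIoc_of_le hc] at hu
    rw [abs_of_pos hu.1]
  have hall : ∀ c, IntervalIntegrable (fun u : ℝ => |u| ^ r) volume 0 c := by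
    intro c
    rcases le_total 0 c with hc | hc
    · exact hpos c hc
    · simpa using (hpos (-c) (neg_nonneg.mpr hc)).comp_mul_left (c := -1)
  exact (hall a).symm.trans (hall b)

/-- Dominated by `exp (-y ^ 2 / (4 * t)) + 1_{|x - y| ≤ 1} · |x - y| ^ r`. -/
lemma integrable_exp_neg_sq_div_mul_abs_rpow (ht : 0 < t) {r : ℝ} (hr : -1 < r) (hr0 : r ≤ 0)
    (x : ℝ) : Integrable fun y : ℝ => exp (-y ^ 2 / (4 * t)) * |x - y| ^ r := by
  have hloc : Integrable ((Icc (-1 : ℝ) 1).indicator fun u => |u| ^ r) := by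
    rw [integrable_indicator_iff measurableSet_Icc, integrableOn_Icc_iff_integrableOn_Ioc,
      ← intervalIntegrable_iff_integrableOn_Ioc_of_le (by norm_num)]
    exact intervalIntegrable_abs_rpow hr _ _
  refine ((integrable_exp_neg_sq_div ht).add (hloc.comp_sub_left x)).mono' (by fun_prop)
    (Eventually.of_forall fun y => ?_)
  have hexp := exp_neg_sq_div_le_one ht.le y
  have hpow : 0 ≤ |x - y| ^ r := rpow_nonneg (abs_nonneg _) r
  rw [norm_of_nonneg (mul_nonneg (exp_pos _).le hpow), Pi.add_apply]
  by_cases hxy : |x - y| ≤ 1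
  · rw [indicator_of_mem (show x - y ∈ Icc (-1) 1 from abs_le.mp hxy)]
    nlinarith [exp_pos (-y ^ 2 / (4 * t))]
  · rw [indicator_of_notMem (show x - y ∉ Icc (-1) 1 from fun h => hxy (abs_le.mpr h))]
    have : |x - y| ^ r ≤ 1 := rpow_le_one_of_one_le_of_nonpos (by linarith) hr0
    nlinarith [exp_pos (-y ^ 2 / (4 * t))]

end Kernel

section Gauss1

variable {t : ℝ} {f g : ℝ → ℝ}

lemma gauss1_nonneg (ht : 0 ≤ t) (hf : 0 ≤ f) (x : ℝ) : 0 ≤ gauss1 t f x :=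
  mul_nonneg (rpow_nonneg (by positivity) _)
    (integral_nonneg fun y => mul_nonneg (exp_pos _).le (hf _))

lemma gauss1_mono (ht : 0 ≤ t) (hf : 0 ≤ f) (hfg : f ≤ g) {x : ℝ}
    (hg : Integrable fun y : ℝ => exp (-y ^ 2 / (4 * t)) * g (x - y)) :
    gauss1 t f x ≤ gauss1 t g x := by
  refine mul_le_mul_of_nonneg_left ?_ (rpow_nonneg (by positivity) _)
  exact integral_mono_of_nonneg
    (Eventually.of_forall fun y => mul_nonneg (exp_pos _).le (hf _)) hg
    (Eventually.of_forall fun y => mul_le_mul_of_nonneg_left (hfg _) (exp_pos _).le)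

lemma gauss1_const_mul (c x : ℝ) :
    gauss1 t (fun u => c * f u) x = c * gauss1 t f x := by
  simp only [gauss1, mul_left_comm _ c, integral_const_mul]

lemma gauss1_neg (x : ℝ) :
    gauss1 t f (-x) = gauss1 t (fun u => f (-u)) x := by
  simp only [gauss1]
  rw [← integral_neg_eq_self]
  simp only [neg_sq, neg_sub_neg, neg_sub]

lemma gauss1_mul_sq (ht : 0 ≤ t) {c : ℝ} (hc : c ≠ 0) (f : ℝ → ℝ) (x : ℝ) :
    gauss1 (t * c ^ 2) f (c * x) = gauss1 t (fun u => f (c * u)) x := by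
  have hcoeff :
      (4 * π * (t * c ^ 2)) ^ (-(1 : ℝ) / 2) = (4 * π * t) ^ (-(1 : ℝ) / 2) * |c|⁻¹ := by
    rw [show 4 * π * (t * c ^ 2) = 4 * π * t * |c| ^ 2 by rw [sq_abs]; ring,
      mul_rpow (by positivity) (by positivity), ← rpow_natCast, ← rpow_mul (abs_nonneg c)]
    norm_num [rpow_neg_one]
  have hsub := Measure.integral_comp_mul_left
    (fun y => exp (-y ^ 2 / (4 * (t * c ^ 2))) * f (c * x - y)) c
  have hexp : ∀ z, -(c * z) ^ 2 / (4 * (t * c ^ 2)) = -z ^ 2 / (4 * t) := fun z => by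
    rw [mul_pow, show 4 * (t * c ^ 2) = 4 * t * c ^ 2 by ring, neg_div, neg_div,
      mul_comm (c ^ 2), mul_div_mul_right _ _ (pow_ne_zero 2 hc)]
  simp only [hexp, ← mul_sub] at hsub
  rw [gauss1, gauss1, hcoeff, hsub, smul_eq_mul, abs_inv, mul_assoc]

lemma le_gauss1Max (ht : 0 < t) (f : ℝ → ℝ) (x : ℝ) :
    ENNReal.ofReal (gauss1 t f x) ≤ gauss1Max f x :=
  (Real.ofReal_le_enorm _).trans
    (le_iSup₂ (f := fun (t : ℝ) (_ : 0 < t) => (‖gauss1 t f x‖₊ : ℝ≥0∞)) t ht)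

lemma gauss1Max_neg (hf : ∀ u, f (-u) = f u) (x : ℝ) : gauss1Max f (-x) = gauss1Max f x := by
  simp only [gauss1Max, gauss1_neg, hf]

end Gauss1

section Truncation

def shell (a b : ℝ) : Set ℝ := (fun x : ℝ => |x|) ⁻¹' Icc a b

def truncAbsRpow (r a b : ℝ) : ℝ → ℝ := (shell a b).indicator fun x => |x| ^ r

variable {r a b : ℝ}

lemma measurableSet_shell : MeasurableSet (shell a b) :=
  measurable_abs measurableSet_Icc

lemma isCompact_shell : IsCompact (shell a b) :=
  Metric.isCompact_of_isClosed_isBounded (isClosed_Icc.preimage continuous_abs)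
    ((Metric.isBounded_Icc (-b) b).subset fun _ hx => abs_le.mp hx.2)

lemma truncAbsRpow_nonneg : 0 ≤ truncAbsRpow r a b :=
  indicator_nonneg fun x _ => rpow_nonneg (abs_nonneg x) r

lemma truncAbsRpow_le (x : ℝ) : truncAbsRpow r a b x ≤ |x| ^ r :=
  indicator_le_self' (fun x _ => rpow_nonneg (abs_nonneg x) r) x

lemma truncAbsRpow_le_rpow (ha : 0 < a) (hr : r ≤ 0) (x : ℝ) : truncAbsRpow r a b x ≤ a ^ r :=
  indicator_apply_le' (fun hx => rpow_le_rpow_of_nonpos ha hx.1 hr)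
    fun _ => (rpow_pos_of_pos ha r).le

lemma measurable_truncAbsRpow : Measurable (truncAbsRpow r a b) :=
  (measurable_abs.pow_const r).indicator measurableSet_shell

lemma truncAbsRpow_neg (x : ℝ) : truncAbsRpow r a b (-x) = truncAbsRpow r a b x := by
  simp only [truncAbsRpow, shell, indicator, mem_preimage, abs_neg]

lemma rpow_mul_truncAbsRpow_le {c n : ℝ} (hc : 1 ≤ c) (hcn : c ≤ n) (u : ℝ) :
    c ^ r * truncAbsRpow r a b u ≤ truncAbsRpow r a (n * b) (c * u) := by
  have hc0 : 0 < c := zero_lt_one.trans_le hc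
  by_cases hu : u ∈ shell a b
  · have hcu : c * u ∈ shell a (n * b) := by
      refine ⟨?_, ?_⟩ <;> simp only [abs_mul, abs_of_pos hc0]
      · exact hu.1.trans (le_mul_of_one_le_left (abs_nonneg u) hc)
      · exact mul_le_mul hcn hu.2 (abs_nonneg u) (hc0.le.trans hcn)
    rw [truncAbsRpow, truncAbsRpow, indicator_of_mem hu, indicator_of_mem hcu, abs_mul,
      abs_of_pos hc0, mul_rpow hc0.le (abs_nonneg u)]
  · rw [truncAbsRpow, indicator_of_notMem hu, mul_zero]
    exact truncAbsRpow_nonneg _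

lemma tendsto_truncAbsRpow {x : ℝ} (hx : x ≠ 0) :
    Tendsto (fun m : ℕ => truncAbsRpow r (m : ℝ)⁻¹ m x) atTop (𝓝 (|x| ^ r)) := by
  refine tendsto_const_nhds.congr' ?_
  have hlow := (tendsto_inv_atTop_zero.comp tendsto_natCast_atTop_atTop).eventually
    (gt_mem_nhds (abs_pos.mpr hx))
  filter_upwards [hlow, tendsto_natCast_atTop_atTop.eventually_ge_atTop |x|] with m hm hm'
  exact (indicator_of_mem (show x ∈ shell (m : ℝ)⁻¹ m from ⟨hm.le, hm'⟩)
    (fun x : ℝ => |x| ^ r)).symm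

end Truncation

section Norms

variable {a b p : ℝ}

lemma lintegral_indicator_shell_inv_abs (ha : 0 < a) (hab : a ≤ b) :
    ∫⁻ x, (shell a b).indicator (fun x => ENNReal.ofReal |x|⁻¹) x =
      ENNReal.ofReal (2 * log (b / a)) := by
  have hint : Integrable ((shell a b).indicator fun x : ℝ => |x|⁻¹) := by
    rw [integrable_indicator_iff measurableSet_shell]
    exact ContinuousOn.integrableOn_compact isCompact_shell
      (continuous_abs.continuousOn.inv₀ fun x hx => (ha.trans_le hx.1).ne')
  have hval : ∫ x, (shell a b).indicator (fun x => |x|⁻¹) x = 2 * log (b / a) := by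
    have hcomp : ∀ x : ℝ, (shell a b).indicator (fun x => |x|⁻¹) x
        = (Icc a b).indicator (fun y => y⁻¹) |x| :=
      fun x => indicator_comp_right (fun x : ℝ => |x|) (g := fun y : ℝ => y⁻¹)
    have h0 : (0 : ℝ) ∉ uIcc a b := by
      rw [uIcc_of_le hab]
      exact fun h => (ha.trans_le h.1).ne' rfl
    rw [integral_congr_ae (Eventually.of_forall hcomp), integral_comp_abs,
      setIntegral_indicator measurableSet_Icc,
      inter_eq_right.mpr (Icc_subset_Ioi_iff hab |>.mpr ha),
      integral_Icc_eq_integral_Ioc, ← intervalIntegral.integral_of_le hab, integral_inv h0]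
  rw [← hval, ofReal_integral_eq_lintegral_ofReal hint
    (Eventually.of_forall fun x =>
      indicator_nonneg (fun x _ => inv_nonneg.mpr (abs_nonneg x)) x)]
  congr with x
  by_cases hx : x ∈ shell a b <;> simp [hx]

lemma ofReal_abs_rpow_neg_inv_rpow (hp : 0 < p) (x : ℝ) :
    ENNReal.ofReal (|x| ^ (-1 / p)) ^ p = ENNReal.ofReal |x|⁻¹ := by
  rw [ENNReal.ofReal_rpow_of_nonneg (rpow_nonneg (abs_nonneg x) _) hp.le,
    ← rpow_mul (abs_nonneg x), div_mul_cancel₀ _ hp.ne', rpow_neg_one]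

lemma enorm_truncAbsRpow_rpow (hp : 0 < p) (x : ℝ) :
    ‖truncAbsRpow (-1 / p) a b x‖ₑ ^ p =
      (shell a b).indicator (fun x => ENNReal.ofReal |x|⁻¹) x := by
  by_cases hx : x ∈ shell a b
  · rw [truncAbsRpow, indicator_of_mem hx, indicator_of_mem hx,
      Real.enorm_eq_ofReal (rpow_nonneg (abs_nonneg x) _), ofReal_abs_rpow_neg_inv_rpow hp]
  · rw [truncAbsRpow, indicator_of_notMem hx, indicator_of_notMem hx, enorm_zero,
      ENNReal.zero_rpow_of_pos hp]

lemma eLpNorm_truncAbsRpow (hp : 0 < p) (ha : 0 < a) (hab : a ≤ b) :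
    eLpNorm (truncAbsRpow (-1 / p) a b) (ENNReal.ofReal p) volume =
      ENNReal.ofReal (2 * log (b / a)) ^ (1 / p) := by
  rw [eLpNorm_eq_lintegral_rpow_enorm_toReal (by simpa using hp) ENNReal.ofReal_ne_top,
    ENNReal.toReal_ofReal hp.le]
  simp only [enorm_truncAbsRpow_rpow hp, lintegral_indicator_shell_inv_abs ha hab]

lemma memLp_truncAbsRpow (hp : 0 < p) (ha : 0 < a) (hab : a ≤ b) :
    MemLp (truncAbsRpow (-1 / p) a b) (ENNReal.ofReal p) volume :=
  ⟨measurable_truncAbsRpow.aestronglyMeasurable, by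
    rw [eLpNorm_truncAbsRpow hp ha hab]
    exact ENNReal.rpow_lt_top_of_nonneg (by positivity) ENNReal.ofReal_ne_top⟩

end Norms

section LowerBound

variable {p t a b n : ℝ}

lemma rpow_mul_gauss1_truncAbsRpow_le {r : ℝ} (hr : r ≤ 0) (ht : 0 < t) (ha : 0 < a) {c : ℝ}
    (hc : 1 ≤ c) (hcn : c ≤ n) :
    c ^ r * gauss1 t (truncAbsRpow r a b) 1 ≤
      gauss1 (t * c ^ 2) (truncAbsRpow r a (n * b)) c := by
  have hscale := gauss1_mul_sq ht.le (zero_lt_one.trans_le hc).ne' (truncAbsRpow r a (n * b)) 1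
  rw [mul_one] at hscale
  rw [← gauss1_const_mul, hscale]
  refine gauss1_mono ht.le
    (fun u => mul_nonneg (rpow_nonneg (zero_le_one.trans hc) r) (truncAbsRpow_nonneg u))
    (rpow_mul_truncAbsRpow_le hc hcn) ?_
  refine (integrable_exp_neg_sq_div ht).mul_bdd (c := a ^ r)
    (measurable_truncAbsRpow.comp (by fun_prop)).aestronglyMeasurable
    (Eventually.of_forall fun y => ?_)
  rw [norm_of_nonneg (truncAbsRpow_nonneg _)]
  exact truncAbsRpow_le_rpow ha hr _

lemma ofReal_mul_rpow_le_gauss1Max {r : ℝ} (hr : r ≤ 0) (ht : 0 < t) (ha : 0 < a) {x : ℝ}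
    (hx : x ∈ shell 1 n) :
    ENNReal.ofReal (gauss1 t (truncAbsRpow r a b) 1 * |x| ^ r) ≤
      gauss1Max (truncAbsRpow r a (n * b)) x := by
  wlog hx0 : 0 ≤ x generalizing x
  · rw [← gauss1Max_neg truncAbsRpow_neg, ← abs_neg]
    exact this (by simpa only [shell, mem_preimage, abs_neg] using hx) (by linarith)
  obtain ⟨hx1, hxn⟩ : 1 ≤ x ∧ x ≤ n := by
    simpa only [shell, mem_preimage, mem_Icc, abs_of_nonneg hx0] using hx
  rw [abs_of_nonneg hx0, mul_comm]
  exact (ENNReal.ofReal_le_ofReal (rpow_mul_gauss1_truncAbsRpow_le hr ht ha hx1 hxn)).trans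
    (le_gauss1Max (by positivity) _ _)

lemma ofReal_rpow_mul_le_lintegral_gauss1Max (hp : 0 < p) (ht : 0 < t) (ha : 0 < a)
    (hn : 1 ≤ n) :
    ENNReal.ofReal (gauss1 t (truncAbsRpow (-1 / p) a b) 1) ^ p * ENNReal.ofReal (2 * log n) ≤
      ∫⁻ x, gauss1Max (truncAbsRpow (-1 / p) a (n * b)) x ^ p := by
  set c := gauss1 t (truncAbsRpow (-1 / p) a b) 1
  have hc0 : 0 ≤ c := gauss1_nonneg ht.le truncAbsRpow_nonneg 1
  have hlog := lintegral_indicator_shell_inv_abs one_pos hn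
  rw [div_one] at hlog
  rw [← hlog,
    ← lintegral_const_mul' _ _ (ENNReal.rpow_ne_top_of_nonneg hp.le ENNReal.ofReal_ne_top)]
  refine lintegral_mono fun x => ?_
  by_cases hx : x ∈ shell 1 n
  · rw [indicator_of_mem hx, ← ofReal_abs_rpow_neg_inv_rpow hp,
      ← ENNReal.mul_rpow_of_nonneg _ _ hp.le, ← ENNReal.ofReal_mul hc0]
    exact ENNReal.rpow_le_rpow
      (ofReal_mul_rpow_le_gauss1Max (neg_one_div_nonpos hp.le) ht ha hx) hp.le
  · rw [indicator_of_notMem hx, mul_zero]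
    exact bot_le

lemma gauss1_truncAbsRpow_le (hp : 0 < p) {D : ℝ} (hD : 0 ≤ D)
    (hC : ∀ f : ℝ → ℝ, MemLp f (ENNReal.ofReal p) volume →
      (∫⁻ x, gauss1Max f x ^ p) ^ (1 / p) ≤
        ENNReal.ofReal D * eLpNorm f (ENNReal.ofReal p) volume)
    (ht : 0 < t) (ha : 0 < a) (hab : a ≤ b) :
    gauss1 t (truncAbsRpow (-1 / p) a b) 1 ≤ D := by
  set c := gauss1 t (truncAbsRpow (-1 / p) a b) 1
  have hc0 : 0 ≤ c := gauss1_nonneg ht.le truncAbsRpow_nonneg 1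
  have hgrowth : ∀ L, 0 ≤ L → c ^ p * L ≤ D ^ p * L + D ^ p * (2 * log (b / a)) := by
    intro L hL
    set n := exp (L / 2)
    have hn : 1 ≤ n := one_le_exp (by positivity)
    have hnb : a ≤ n * b := hab.trans (le_mul_of_one_le_left (ha.le.trans hab) hn)
    have hnorm := ENNReal.rpow_le_rpow (hC _ (memLp_truncAbsRpow hp ha hnb)) hp.le
    rw [eLpNorm_truncAbsRpow hp ha hnb, ENNReal.mul_rpow_of_nonneg _ _ hp.le, one_div,
      ENNReal.rpow_inv_rpow hp.ne', ENNReal.rpow_inv_rpow hp.ne'] at hnorm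
    have hlower := (ofReal_rpow_mul_le_lintegral_gauss1Max hp ht ha hn).trans hnorm
    rw [ENNReal.ofReal_rpow_of_nonneg hc0 hp.le, ENNReal.ofReal_rpow_of_nonneg hD hp.le,
      ← ENNReal.ofReal_mul (rpow_nonneg hc0 p), ← ENNReal.ofReal_mul (rpow_nonneg hD p),
      ENNReal.ofReal_le_ofReal_iff (mul_nonneg (rpow_nonneg hD p)
        (mul_nonneg zero_le_two (log_nonneg ((one_le_div ha).mpr hnb)))),
      mul_div_assoc, log_mul (exp_pos _).ne' (div_pos (ha.trans_le hab) ha).ne',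
      log_exp] at hlower
    linarith
  exact (rpow_le_rpow_iff hc0 hD hp).mp (le_of_forall_mul_le_mul_add hgrowth)

end LowerBound

lemma tendsto_gauss1_truncAbsRpow {t r : ℝ} (ht : 0 < t) (hr : -1 < r) (hr0 : r ≤ 0) (x : ℝ) :
    Tendsto (fun m : ℕ => gauss1 t (truncAbsRpow r (m : ℝ)⁻¹ m) x) atTop
      (𝓝 (gauss1 t (fun u => |u| ^ r) x)) := by
  refine Tendsto.const_mul _ (tendsto_integral_of_dominated_convergence _
    (fun m => (by fun_prop : Measurable fun y : ℝ => exp (-y ^ 2 / (4 * t))).mul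
      (measurable_truncAbsRpow.comp (by fun_prop)) |>.aestronglyMeasurable)
    (integrable_exp_neg_sq_div_mul_abs_rpow ht hr hr0 x) (fun m => ?_) ?_)
  · refine Eventually.of_forall fun y => ?_
    rw [norm_of_nonneg (mul_nonneg (exp_pos _).le (truncAbsRpow_nonneg _))]
    exact mul_le_mul_of_nonneg_left (truncAbsRpow_le _) (exp_pos _).le
  · filter_upwards [measure_singleton x |> measure_eq_zero_iff_ae_notMem.mp] with y hy
    exact (tendsto_truncAbsRpow (sub_ne_zero.mpr (Ne.symm hy))).const_mul _

theorem gauss1Max_abs_rpow_le_gauss1OpNorm {p : ℝ} (hp : 1 < p) :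
    gauss1Max (fun x : ℝ => |x| ^ (-1 / p)) 1 ≤ gauss1OpNorm p := by
  have hp0 : 0 < p := zero_lt_one.trans hp
  refine le_sInf fun C hC => ?_
  rcases eq_or_ne C ⊤ with rfl | hCtop
  · exact le_top
  rw [← ENNReal.ofReal_toReal hCtop] at hC ⊢
  refine iSup₂_le fun t ht => ?_
  rw [← enorm_eq_nnnorm,
    Real.enorm_eq_ofReal (gauss1_nonneg ht.le (fun u => rpow_nonneg (abs_nonneg u) _) 1)]
  refine ENNReal.ofReal_le_ofReal (le_of_tendsto (tendsto_gauss1_truncAbsRpow ht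
    (neg_one_lt_neg_one_div hp) (neg_one_div_nonpos hp0.le) 1) ?_)
  filter_upwards [eventually_ge_atTop 1] with m hm
  have hm' : (1 : ℝ) ≤ m := by exact_mod_cast hm
  exact gauss1_truncAbsRpow_le hp0 ENNReal.toReal_nonneg hC ht (by positivity)
    ((inv_le_one_of_one_le₀ hm').trans hm')

lemma integral_Icc_abs_one_sub_rpow {r : ℝ} (hr : -1 < r) :
    ∫ y in Icc (-1 : ℝ) 1, |1 - y| ^ r = 2 ^ (r + 1) / (r + 1) := by
  rw [integral_Icc_eq_integral_Ioc, ← intervalIntegral.integral_of_le (by norm_num),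
    intervalIntegral.integral_comp_sub_left (fun u => |u| ^ r) 1]
  norm_num only
  rw [intervalIntegral.integral_congr (g := fun u => u ^ r) fun u hu => by
      rw [uIcc_of_le zero_le_two] at hu
      rw [abs_of_nonneg hu.1],
    integral_rpow (Or.inl hr), zero_rpow (by linarith), sub_zero]

lemma le_gauss1_half_abs_rpow {r : ℝ} (hr : -1 < r) (hr0 : r ≤ 0) :
    (2 * π) ^ (-1 / 2 : ℝ) * exp (-1 / 2) * (2 ^ (r + 1) / (r + 1)) ≤
      gauss1 (1 / 2) (fun x => |x| ^ r) 1 := by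
  rw [gauss1, show 4 * π * (1 / 2) = 2 * π by ring, mul_assoc]
  refine mul_le_mul_of_nonneg_left ?_ (rpow_nonneg (by positivity) _)
  rw [← integral_Icc_abs_one_sub_rpow hr, ← integral_const_mul,
    ← integral_indicator measurableSet_Icc]
  refine integral_mono_of_nonneg
    (Eventually.of_forall fun y => indicator_nonneg
      (fun y _ => mul_nonneg (exp_pos _).le (rpow_nonneg (abs_nonneg _) _)) y)
    (integrable_exp_neg_sq_div_mul_abs_rpow (by norm_num) hr hr0 1)
    (Eventually.of_forall fun y => ?_)
  by_cases hy : y ∈ Icc (-1 : ℝ) 1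
  · rw [indicator_of_mem hy]
    have hy2 : y ^ 2 ≤ 1 := by nlinarith [hy.1, hy.2]
    exact mul_le_mul_of_nonneg_right (exp_le_exp.mpr (by linarith))
      (rpow_nonneg (abs_nonneg _) _)
  · rw [indicator_of_notMem hy]
    exact mul_nonneg (exp_pos _).le (rpow_nonneg (abs_nonneg _) _)

lemma ofReal_le_gauss1Max_abs_rpow {p : ℝ} (hp : 1 < p) :
    ENNReal.ofReal (2 ^ ((p - 1) / p) / √(2 * exp 1 * π) * (p / (p - 1))) ≤
      gauss1Max (fun x : ℝ => |x| ^ (-1 / p)) 1 := by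
  have hp0 : 0 < p := zero_lt_one.trans hp
  have hconst : (2 * π) ^ (-1 / 2 : ℝ) * exp (-1 / 2) * (2 ^ (-1 / p + 1) / (-1 / p + 1)) =
      2 ^ ((p - 1) / p) / √(2 * exp 1 * π) * (p / (p - 1)) := by
    have hp1 : p - 1 ≠ 0 := by linarith
    rw [show -1 / p + 1 = (p - 1) / p by field_simp; ring,
      show (-1 / 2 : ℝ) = -(1 / 2) by norm_num, rpow_neg (by positivity), ← sqrt_eq_rpow,
      exp_neg, exp_half,
      show 2 * exp 1 * π = 2 * π * exp 1 by ring, sqrt_mul (x := 2 * π) (by positivity)]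
    field_simp
  rw [← hconst]
  exact (ENNReal.ofReal_le_ofReal (le_gauss1_half_abs_rpow (neg_one_lt_neg_one_div hp)
    (neg_one_div_nonpos hp0.le))).trans (le_gauss1Max (by norm_num) _ _)

/-- For every `p ∈ (1,∞)`, `‖𝒢_*^1‖_{L^p(ℝ)} ≥ 𝒢_*^1(|x|^{−1/p})(1)`; in particular
`‖𝒢_*^1‖_{L^p(ℝ)} ≥ (2^{(p−1)/p}/√(2eπ)) · p/(p−1)`. -/
theorem gauss1OpNorm_ge_homogeneous (p : ℝ) (hp : 1 < p) :
    gauss1Max (fun x : ℝ => |x| ^ (-(1 : ℝ) / p)) 1 ≤ gauss1OpNorm p ∧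
    ENNReal.ofReal (2 ^ ((p - 1) / p) / Real.sqrt (2 * Real.exp 1 * π) * (p / (p - 1))) ≤
      gauss1OpNorm p := by
  have hmax := gauss1Max_abs_rpow_le_gauss1OpNorm hp
  exact ⟨hmax, (ofReal_le_gauss1Max_abs_rpow hp).trans hmax⟩

end
end

section
/- For every p ∈ (1,∞), the operator norm of the one-dimensional Gaussian maximal function satisfies ‖𝒢_*^1‖_{L^p(ℝ)} ≥ (2p/(π e^p))^{1/(2p)} (p/(p−1))^{1/p}; this lower bound is witnessed by testing 𝒢_*^1 on the Gaussian function γ(x) = (4π)^{−1/2} e^{−x²/4}. -/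
open MeasureTheory Filter
open scoped ENNReal NNReal Real Topology

noncomputable section

/-!
Heat kernels form a semigroup, so `𝒢_t γ` is the heat kernel at time `1 + t` and
`𝒢_* γ(x) ≥ sup_{s ≥ 1} (4πs)^{-1/2} e^{-x²/(4s)}`. The choice `s = max(1, |x|/√2)²` (the
maximiser `s = x²/2` once `|x| > √2`) gives `𝒢_* γ(x) ≥ (4π)^{-1/2} e^{-1/2} / max(1, |x|/√2)`.
The `p`-th powers of this minorant and of `γ` have explicit integrals, whose ratio is the
`p`-th power of the constant.
-/

lemma rpow_neg_one_half_eq_inv_sqrt {a : ℝ} (ha : 0 ≤ a) : a ^ (-(1 : ℝ) / 2) = (√a)⁻¹ := by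
  rw [neg_div, Real.rpow_neg ha, Real.sqrt_eq_rpow]

lemma integral_exp_neg_mul_sq_add_mul_add {a : ℝ} (ha : 0 < a) (b c : ℝ) :
    ∫ x : ℝ, Real.exp (-a * x ^ 2 + b * x + c) = √(π / a) * Real.exp (c + b ^ 2 / (4 * a)) := by
  have complete_square (x : ℝ) : Real.exp (-a * x ^ 2 + b * x + c)
      = Real.exp (-a * (x - b / (2 * a)) ^ 2) * Real.exp (c + b ^ 2 / (4 * a)) := by
    rw [← Real.exp_add]; congr 1; field_simp; ring
  simp_rw [complete_square, integral_mul_const]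
  rw [integral_sub_right_eq_self (fun x : ℝ => Real.exp (-a * x ^ 2)) (b / (2 * a)),
    integral_gaussian]

lemma integral_max_one_abs_rpow_neg {q : ℝ} (hq : 1 < q) :
    ∫ x : ℝ, max 1 |x| ^ (-q) = 2 * q / (q - 1) := by
  have eq_one : Set.EqOn (fun x : ℝ => max 1 x ^ (-q)) (fun _ => 1) (Set.Ioc 0 1) := fun x hx => by
    simp [max_eq_left hx.2]
  have eq_rpow : Set.EqOn (fun x : ℝ => max 1 x ^ (-q)) (fun x => x ^ (-q)) (Set.Ioi 1) :=
    fun x hx => by simp [max_eq_right (Set.mem_Ioi.1 hx).le]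
  have int_Ioc : IntegrableOn (fun x : ℝ => max 1 x ^ (-q)) (Set.Ioc 0 1) :=
    (integrableOn_const measure_Ioc_lt_top.ne).congr_fun eq_one.symm measurableSet_Ioc
  have int_Ioi : IntegrableOn (fun x : ℝ => max 1 x ^ (-q)) (Set.Ioi 1) :=
    (integrableOn_Ioi_rpow_of_lt (by linarith) one_pos).congr_fun eq_rpow.symm measurableSet_Ioi
  rw [integral_comp_abs (f := fun x => max 1 x ^ (-q)), ← Set.Ioc_union_Ioi_eq_Ioi zero_le_one,
    setIntegral_union Set.Ioc_disjoint_Ioi_same measurableSet_Ioi int_Ioc int_Ioi,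
    setIntegral_congr_fun measurableSet_Ioc eq_one, setIntegral_congr_fun measurableSet_Ioi eq_rpow,
    integral_Ioi_rpow_of_lt (by linarith) one_pos, setIntegral_const,
    Real.volume_real_Ioc_of_le zero_le_one, Real.one_rpow, smul_eq_mul]
  have : -q + 1 ≠ 0 := by linarith
  have : q - 1 ≠ 0 := by linarith
  field_simp
  ring

lemma integral_max_one_abs_div_rpow_neg {a q : ℝ} (ha : 0 < a) (hq : 1 < q) :
    ∫ x : ℝ, max 1 (|x| / a) ^ (-q) = a * (2 * q / (q - 1)) := by
  have h := Measure.integral_comp_div (fun x : ℝ => max 1 |x| ^ (-q)) a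
  simp only [abs_div, abs_of_pos ha, smul_eq_mul] at h
  rw [h, integral_max_one_abs_rpow_neg hq]

lemma integrable_max_one_abs_div_rpow_neg {a q : ℝ} (ha : 0 < a) (hq : 1 < q) :
    Integrable fun x : ℝ => max 1 (|x| / a) ^ (-q) := by
  refine Integrable.of_integral_ne_zero ?_
  rw [integral_max_one_abs_div_rpow_neg ha hq]
  have : 0 < q - 1 := by linarith
  positivity

section Lp

variable {α : Type*} [MeasurableSpace α] {μ : Measure α} {p : ℝ}

lemma eLpNorm_ofReal_eq_ofReal_integral_rpow (hp : 0 < p) {f : α → ℝ} (hf : 0 ≤ f)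
    (hfp : Integrable (fun x => f x ^ p) μ) :
    eLpNorm f (ENNReal.ofReal p) μ = ENNReal.ofReal ((∫ x, f x ^ p ∂μ) ^ (1 / p)) := by
  rw [eLpNorm_eq_lintegral_rpow_enorm_toReal (by simpa using hp) ENNReal.ofReal_ne_top,
    ENNReal.toReal_ofReal hp.le,
    ← ENNReal.ofReal_rpow_of_nonneg (integral_nonneg fun x => Real.rpow_nonneg (hf x) p)
      (by positivity),
    ofReal_integral_eq_lintegral_ofReal hfp (ae_of_all _ fun x => Real.rpow_nonneg (hf x) p)]
  congr 1
  refine lintegral_congr fun x => ?_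
  rw [Real.enorm_eq_ofReal (hf x), ENNReal.ofReal_rpow_of_nonneg (hf x) hp.le]

lemma eLpNorm_ofReal_le_lintegral_rpow (hp : 0 < p) {f : α → ℝ} {g : α → ℝ≥0∞}
    (hfg : ∀ x, ‖f x‖ₑ ≤ g x) :
    eLpNorm f (ENNReal.ofReal p) μ ≤ (∫⁻ x, g x ^ p ∂μ) ^ (1 / p) := by
  rw [eLpNorm_eq_lintegral_rpow_enorm_toReal (by simpa using hp) ENNReal.ofReal_ne_top,
    ENNReal.toReal_ofReal hp.le]
  gcongr with x
  exact hfg x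

end Lp

def heatKernel (t x : ℝ) : ℝ := (4 * π * t) ^ (-(1 : ℝ) / 2) * Real.exp (-x ^ 2 / (4 * t))

lemma heatKernel_pos {t : ℝ} (ht : 0 < t) (x : ℝ) : 0 < heatKernel t x := by
  unfold heatKernel; positivity

lemma heatKernel_rpow {t : ℝ} (ht : 0 < t) (p x : ℝ) :
    heatKernel t x ^ p = ((4 * π * t) ^ (-(1 : ℝ) / 2)) ^ p * Real.exp (-(p / (4 * t)) * x ^ 2) := by
  rw [heatKernel, Real.mul_rpow (by positivity) (Real.exp_nonneg _), ← Real.exp_mul]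
  congr 2
  ring

lemma integral_heatKernel_rpow {t : ℝ} (ht : 0 < t) (p : ℝ) :
    ∫ x, heatKernel t x ^ p = ((4 * π * t) ^ (-(1 : ℝ) / 2)) ^ p * √(π / (p / (4 * t))) := by
  simp_rw [heatKernel_rpow ht]
  rw [integral_const_mul, integral_gaussian]

lemma integrable_heatKernel_rpow {t p : ℝ} (ht : 0 < t) (hp : 0 < p) :
    Integrable fun x => heatKernel t x ^ p := by
  simp_rw [heatKernel_rpow ht]
  exact (integrable_exp_neg_mul_sq (by positivity)).const_mul _

lemma memLp_heatKernel {t p : ℝ} (ht : 0 < t) (hp : 0 < p) :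
    MemLp (heatKernel t) (ENNReal.ofReal p) volume := by
  have hcont : Continuous (heatKernel t) := by unfold heatKernel; fun_prop
  rw [← integrable_norm_rpow_iff hcont.aestronglyMeasurable (by simpa using hp)
    ENNReal.ofReal_ne_top, ENNReal.toReal_ofReal hp.le]
  simp_rw [Real.norm_of_nonneg (heatKernel_pos ht _).le]
  exact integrable_heatKernel_rpow ht hp

lemma gauss1_heatKernel {s t : ℝ} (hs : 0 < s) (ht : 0 < t) (x : ℝ) :
    gauss1 t (heatKernel s) x = heatKernel (s + t) x := by
  have ha : 0 < (s + t) / (4 * s * t) := by positivity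
  have integrand (y : ℝ) : Real.exp (-y ^ 2 / (4 * t)) * heatKernel s (x - y)
      = (4 * π * s) ^ (-(1 : ℝ) / 2) *
        Real.exp (-((s + t) / (4 * s * t)) * y ^ 2 + x / (2 * s) * y + -x ^ 2 / (4 * s)) := by
    rw [heatKernel, mul_left_comm, ← Real.exp_add]
    congr 2
    field_simp
    ring
  have prefactor : (4 * π * t) ^ (-(1 : ℝ) / 2) * ((4 * π * s) ^ (-(1 : ℝ) / 2) *
      √(π / ((s + t) / (4 * s * t)))) = (4 * π * (s + t)) ^ (-(1 : ℝ) / 2) := by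
    rw [show π / ((s + t) / (4 * s * t)) = 4 * π * t * (4 * π * s) / (4 * π * (s + t)) by
        field_simp]
    rw [rpow_neg_one_half_eq_inv_sqrt (by positivity), rpow_neg_one_half_eq_inv_sqrt (by positivity),
      rpow_neg_one_half_eq_inv_sqrt (by positivity), Real.sqrt_div' _ (by positivity),
      Real.sqrt_mul (by positivity : (0 : ℝ) ≤ 4 * π * t)]
    have cancel (a b c : ℝ) (ha : 0 < a) (hb : 0 < b) : a⁻¹ * (b⁻¹ * (a * b / c)) = c⁻¹ := by
      field_simp
    exact cancel _ _ _ (by positivity) (by positivity)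
  have exponent : -x ^ 2 / (4 * s) + (x / (2 * s)) ^ 2 / (4 * ((s + t) / (4 * s * t)))
      = -x ^ 2 / (4 * (s + t)) := by
    field_simp
    ring
  rw [gauss1, heatKernel]
  simp_rw [integrand]
  rw [integral_const_mul, integral_exp_neg_mul_sq_add_mul_add ha, exponent, ← mul_assoc,
    ← mul_assoc, mul_assoc _ _ (√_), prefactor]

lemma ofReal_heatKernel_le_gauss1Max {r s : ℝ} (hr : 0 < r) (hrs : r ≤ s) (x : ℝ) :
    ENNReal.ofReal (heatKernel s x) ≤ gauss1Max (heatKernel r) x := by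
  have later (u : ℝ) (hu : u ∈ Set.Ioi r) :
      ENNReal.ofReal (heatKernel u x) ≤ gauss1Max (heatKernel r) x := by
    have hu' : 0 < u - r := sub_pos.2 hu
    have := le_iSup₂ (f := fun (t : ℝ) (_ : 0 < t) => (‖gauss1 t (heatKernel r) x‖₊ : ℝ≥0∞))
      (u - r) hu'
    rwa [gauss1_heatKernel hr hu', add_sub_cancel, ← enorm_eq_nnnorm,
      Real.enorm_eq_ofReal (heatKernel_pos (hr.trans hu) x).le] at this
  rcases hrs.lt_or_eq with h | rfl
  · exact later s h
  · have hcont : ContinuousAt (fun u => ENNReal.ofReal (heatKernel u x)) r := by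
      unfold heatKernel
      exact ENNReal.continuous_ofReal.continuousAt.comp
        (((Real.continuousAt_rpow_const _ _ (Or.inl (by positivity))).comp (by fun_prop)).mul
          (by fun_prop (disch := positivity)))
    exact le_of_tendsto (hcont.tendsto.mono_left nhdsWithin_le_nhds)
      (eventually_nhdsWithin_of_forall later)

def gaussMaxLowerBound (x : ℝ) : ℝ :=
  (4 * π) ^ (-(1 : ℝ) / 2) * Real.exp (-(1 / 2)) * max 1 (|x| / √2) ^ (-1 : ℝ)

lemma gaussMaxLowerBound_nonneg (x : ℝ) : 0 ≤ gaussMaxLowerBound x := by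
  unfold gaussMaxLowerBound; positivity

lemma gaussMaxLowerBound_le_heatKernel (x : ℝ) :
    gaussMaxLowerBound x ≤ heatKernel (max 1 (|x| / √2) ^ 2) x := by
  rw [gaussMaxLowerBound, heatKernel]
  set m := max 1 (|x| / √2)
  have hm : 0 < m := one_pos.trans_le (le_max_left _ _)
  have hxm : x ^ 2 ≤ 2 * m ^ 2 := by
    have : |x| ≤ √2 * m := (div_le_iff₀' (by positivity)).1 (le_max_right _ _)
    nlinarith [sq_abs x, Real.sq_sqrt zero_le_two, abs_nonneg x]
  have hsq : (m ^ 2) ^ (-(1 : ℝ) / 2) = m ^ (-1 : ℝ) := by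
    rw [← Real.rpow_natCast, ← Real.rpow_mul hm.le]; norm_num
  rw [Real.mul_rpow (by positivity : (0 : ℝ) ≤ 4 * π) (by positivity), hsq, mul_right_comm]
  gcongr
  rw [neg_div, neg_le_neg_iff, div_le_iff₀ (by positivity)]
  linarith

lemma ofReal_gaussMaxLowerBound_le_gauss1Max (x : ℝ) :
    ENNReal.ofReal (gaussMaxLowerBound x) ≤ gauss1Max (heatKernel 1) x :=
  (ENNReal.ofReal_le_ofReal (gaussMaxLowerBound_le_heatKernel x)).trans
    (ofReal_heatKernel_le_gauss1Max one_pos (one_le_pow₀ (le_max_left _ _)) x)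

lemma gaussMaxLowerBound_rpow (p x : ℝ) :
    gaussMaxLowerBound x ^ p
      = ((4 * π) ^ (-(1 : ℝ) / 2) * Real.exp (-(1 / 2))) ^ p * max 1 (|x| / √2) ^ (-p) := by
  have hm : 0 ≤ max 1 (|x| / √2) := zero_le_one.trans (le_max_left _ _)
  rw [gaussMaxLowerBound, Real.mul_rpow (by positivity) (Real.rpow_nonneg hm _),
    ← Real.rpow_mul hm, neg_one_mul]

lemma integral_gaussMaxLowerBound_rpow {p : ℝ} (hp : 1 < p) :
    ∫ x, gaussMaxLowerBound x ^ p
      = ((4 * π) ^ (-(1 : ℝ) / 2) * Real.exp (-(1 / 2))) ^ p * (√2 * (2 * p / (p - 1))) := by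
  simp_rw [gaussMaxLowerBound_rpow]
  rw [integral_const_mul, integral_max_one_abs_div_rpow_neg (by positivity) hp]

lemma integrable_gaussMaxLowerBound_rpow {p : ℝ} (hp : 1 < p) :
    Integrable fun x => gaussMaxLowerBound x ^ p := by
  simp_rw [gaussMaxLowerBound_rpow]
  exact (integrable_max_one_abs_div_rpow_neg (by positivity) hp).const_mul _

lemma rpow_mul_integral_heatKernel_one_rpow {p : ℝ} (hp : 1 < p) :
    ((2 * p / (π * Real.exp 1 ^ p)) ^ (1 / (2 * p)) * (p / (p - 1)) ^ (1 / p)) ^ p *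
        ∫ x, heatKernel 1 x ^ p = ∫ x, gaussMaxLowerBound x ^ p := by
  have hp0 : 0 < p := by linarith
  have hp1 : 0 < p - 1 := by linarith
  have key : √(2 * p / (π * Real.exp p)) * √(π / (p / 4)) = Real.exp (-p / 2) * (2 * √2) := by
    rw [← Real.sqrt_mul (by positivity), show (2 : ℝ) * √2 = √8 by
      rw [show (8 : ℝ) = 2 ^ 2 * 2 by norm_num, Real.sqrt_mul (by positivity),
        Real.sqrt_sq zero_le_two],
      neg_div, Real.exp_neg, Real.exp_half, ← Real.sqrt_inv, ← Real.sqrt_mul (by positivity)]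
    congr 1
    field_simp
    ring
  have const_rpow : ((2 * p / (π * Real.exp 1 ^ p)) ^ (1 / (2 * p)) * (p / (p - 1)) ^ (1 / p)) ^ p
      = √(2 * p / (π * Real.exp p)) * (p / (p - 1)) := by
    rw [Real.mul_rpow (by positivity) (by positivity), ← Real.rpow_mul (by positivity),
      ← Real.rpow_mul (by positivity), Real.exp_one_rpow, Real.sqrt_eq_rpow,
      one_div_mul_cancel hp0.ne', show 1 / (2 * p) * p = 1 / 2 by field_simp, Real.rpow_one]
  have exp_rpow : Real.exp (-(1 / 2)) ^ p = Real.exp (-p / 2) := by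
    rw [← Real.exp_mul]; ring_nf
  rw [integral_heatKernel_rpow one_pos, integral_gaussMaxLowerBound_rpow hp, const_rpow,
    mul_one, mul_one, Real.mul_rpow (by positivity) (Real.exp_nonneg _), exp_rpow]
  linear_combination ((4 * π) ^ (-(1 : ℝ) / 2)) ^ p * (p / (p - 1)) * key

lemma le_gauss1OpNorm {p : ℝ} {c : ℝ≥0∞} {f : ℝ → ℝ} (hf : MemLp f (ENNReal.ofReal p) volume)
    (hf0 : eLpNorm f (ENNReal.ofReal p) volume ≠ 0)
    (hc : c * eLpNorm f (ENNReal.ofReal p) volume ≤ (∫⁻ x, gauss1Max f x ^ p) ^ (1 / p)) :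
    c ≤ gauss1OpNorm p :=
  le_sInf fun _ hC => (ENNReal.mul_le_mul_iff_left hf0 hf.eLpNorm_ne_top).1 (hc.trans (hC f hf))

/-- For every `p ∈ (1,∞)`, `‖𝒢_*^1‖_{L^p(ℝ)} ≥ (2p/(πe^p))^{1/(2p)} (p/(p−1))^{1/p}`,
witnessed by testing `𝒢_*^1` on the Gaussian `γ(x) = (4π)^{−1/2} e^{−x²/4}`. -/
theorem gauss1OpNorm_ge_gaussian (p : ℝ) (hp : 1 < p) :
    ENNReal.ofReal ((2 * p / (π * Real.exp 1 ^ p)) ^ (1 / (2 * p)) * (p / (p - 1)) ^ (1 / p)) *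
        eLpNorm (fun x : ℝ => (4 * π) ^ (-(1 : ℝ) / 2) * Real.exp (-x ^ 2 / 4))
          (ENNReal.ofReal p) volume ≤
      (∫⁻ x, gauss1Max (fun y : ℝ => (4 * π) ^ (-(1 : ℝ) / 2) * Real.exp (-y ^ 2 / 4)) x ^ p) ^
        (1 / p) ∧
    ENNReal.ofReal ((2 * p / (π * Real.exp 1 ^ p)) ^ (1 / (2 * p)) * (p / (p - 1)) ^ (1 / p)) ≤
      gauss1OpNorm p := by
  have hp0 : 0 < p := by linarith
  have hγ : (fun x : ℝ => (4 * π) ^ (-(1 : ℝ) / 2) * Real.exp (-x ^ 2 / 4)) = heatKernel 1 := by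
    funext x; simp [heatKernel]
  rw [hγ]
  set C := (2 * p / (π * Real.exp 1 ^ p)) ^ (1 / (2 * p)) * (p / (p - 1)) ^ (1 / p)
  have hC : 0 ≤ C := by positivity
  have hγp := eLpNorm_ofReal_eq_ofReal_integral_rpow (μ := volume) hp0
    (fun x => (heatKernel_pos one_pos x).le) (integrable_heatKernel_rpow one_pos hp0)
  have lower : ENNReal.ofReal C * eLpNorm (heatKernel 1) (ENNReal.ofReal p) volume
      ≤ (∫⁻ x, gauss1Max (heatKernel 1) x ^ p) ^ (1 / p) :=
    calc ENNReal.ofReal C * eLpNorm (heatKernel 1) (ENNReal.ofReal p) volume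
        = ENNReal.ofReal ((C ^ p * ∫ x, heatKernel 1 x ^ p) ^ (1 / p)) := by
          rw [hγp, ← ENNReal.ofReal_mul hC, Real.mul_rpow (by positivity)
            (integral_nonneg fun x => (Real.rpow_nonneg (heatKernel_pos one_pos x).le p)),
            one_div, Real.rpow_rpow_inv hC hp0.ne']
      _ = eLpNorm gaussMaxLowerBound (ENNReal.ofReal p) volume := by
          rw [rpow_mul_integral_heatKernel_one_rpow hp, eLpNorm_ofReal_eq_ofReal_integral_rpow hp0
            gaussMaxLowerBound_nonneg (integrable_gaussMaxLowerBound_rpow hp)]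
      _ ≤ (∫⁻ x, gauss1Max (heatKernel 1) x ^ p) ^ (1 / p) :=
          eLpNorm_ofReal_le_lintegral_rpow hp0 fun x => by
            rw [Real.enorm_eq_ofReal (gaussMaxLowerBound_nonneg x)]
            exact ofReal_gaussMaxLowerBound_le_gauss1Max x
  refine ⟨lower, le_gauss1OpNorm (memLp_heatKernel one_pos hp0) ?_ lower⟩
  rw [hγp, integral_heatKernel_rpow one_pos]
  positivity

end
end
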